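/- In the quotient 𝒜/ℛ, where ℛ is the span of all π(x) − x with π ∈ S_{M+N} and x a state, every state is equal to 0 or to ±y for some separately ordered state y. -/

import Mathlib

namespace Stmt15

/-- A particle: a spin-1/2 particle `ψ^{(1/2)ε}_{j,k}` or a spin-0 particle `ψ^{(0)ε,μ}_k`. -/
inductive Particle where
  | half (ε : ℤ) (j : Fin 2) (k : ℤ)
  | zero (ε μ : ℤ) (k : ℤ)
deriving DecidableEq

instance : Inhabited Particle := ⟨.half 1 0 0⟩

/-- Validity of the indices of a particle. -/
def Particle.Valid : Particle → Prop
  | .half ε j k => (ε = 1 ∨ ε = -1) ∧ ε * (-1) ^ (j : ℕ) = (-1) ^ k.natAbs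
  | .zero ε μ k => (ε = 1 ∨ ε = -1) ∧ (μ = 1 ∨ μ = -1) ∧ -(ε * μ) = (-1) ^ k.natAbs

/-- The action of a particle on a domain. -/
def Particle.act : Particle → ℤ × ℤ → ℤ × ℤ
  | .half ε _ _, d => (d.1 + ε, d.2)
  | .zero ε μ _, d => (d.1 + ε, d.2 + μ)

def Particle.isHalf : Particle → Bool
  | .half _ _ _ => true
  | .zero _ _ _ => false

/-- `(a,b)` is a domain. -/
def IsDomain (m n : ℤ) (d : ℤ × ℤ) : Prop :=
  0 ≤ d.1 ∧ d.1 ≤ m - n ∧ 0 ≤ d.2 ∧ d.2 ≤ n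

/-- The result of applying the particles of `l` from right to left, starting at `dI`. -/
def runP (dI : ℤ × ℤ) (l : List Particle) : ℤ × ℤ :=
  l.foldr Particle.act dI

/-- A state: a sequence of `M` spin-1/2 and `N` spin-0 particles such that, applying the
particles from right to left starting at the initial domain `dI`, all intermediate pairs
are domains and the last one is the final domain `dF`. -/
def IsState (m n : ℤ) (M N : ℕ) (dI dF : ℤ × ℤ) (l : List Particle) : Prop :=
  l.countP (fun q => q.isHalf) = M ∧
  l.countP (fun q => !q.isHalf) = N ∧
  (∀ q ∈ l, q.Valid) ∧
  (∀ k ≤ l.length, IsDomain m n (runP dI (l.drop k))) ∧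
  runP dI l = dF

/-- The commutation relations: the exchange of an adjacent pair `(x, y)` of particles,
`d` being the intermediate domain immediately to the right of the pair; returns the sign
together with the new adjacent pair. -/
def exch (m n : ℤ) (x y : Particle) (d : ℤ × ℤ) : ℤ × Particle × Particle :=
  match x, y with
  | .half ε j k, .half ε' j' k' =>
      let ν : ℤ := (if ε = ε' then 1 else 0) + (if j = j' then 1 else 0)
      (-1, .half ε j (k' + ν), .half ε' j' (k - ν))
  | .zero ε μ k, .zero ε' μ' k' =>
      let ν : ℤ := (if ε = ε' then 1 else 0) + (if μ = μ' then 1 else 0)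
      (-1, .zero ε μ (k' + ν), .zero ε' μ' (k - ν))
  | .zero ε μ k, .half ε' j k' =>
      if ε = ε' then (1, .half ε' j k', .zero ε μ k)
      else if ε = 1 then
        -- `ψ^{(0)+,μ}_k ψ^{(1/2)-}_{j,k'}`
        if d.1 = m - n then (1, .half 1 j (k' + 1), .zero (-1) μ (k - 1))
        else (1, .half ε' j k', .zero ε μ k)
      else
        -- `ψ^{(0)-,μ}_k ψ^{(1/2)+}_{j,k'}`
        if d.1 = 0 then (1, .half (-1) j (k' + 1), .zero 1 μ (k - 1))
        else (1, .half ε' j k', .zero ε μ k)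
  | .half ε' j k', .zero ε μ k =>
      -- the relations, applied right to left
      if ε = ε' then (1, .zero ε μ k, .half ε' j k')
      else if ε' = -1 then
        if d.1 = 0 then (1, .zero (-1) μ (k + 1), .half 1 j (k' - 1))
        else (1, .zero ε μ k, .half ε' j k')
      else
        if d.1 = m - n then (1, .zero 1 μ (k + 1), .half (-1) j (k' - 1))
        else (1, .zero ε μ k, .half ε' j k')

/-- The transposition `σ` exchanging the particles at (0-based) positions `i`, `i+1`,
acting on a signed sequence of particles. -/
def applyGen (m n : ℤ) (dI : ℤ × ℤ) (i : ℕ) (sl : ℤ × List Particle) : ℤ × List Particle :=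
  match sl.2.drop i with
  | x :: y :: rest =>
      let e := exch m n x y (runP dI rest)
      (sl.1 * e.1, sl.2.take i ++ e.2.1 :: e.2.2 :: rest)
  | _ => sl

/-- The action of a word in the transpositions `σ_i` (the rightmost letter acts first). -/
def applyWord (m n : ℤ) (dI : ℤ × ℤ) : List ℕ → ℤ × List Particle → ℤ × List Particle
  | [], sl => sl
  | i :: w, sl => applyGen m n dI i (applyWord m n dI w sl)

/-- The permutation represented by a word in the transpositions `σ_i` (as a permutation of
the 0-based positions; the rightmost letter acts first). -/
def wordPerm (w : List ℕ) : Equiv.Perm ℕ :=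
  (w.map (fun i => Equiv.swap i (i + 1))).prod

/-- The separately-ordered condition on an adjacent pair of particles. -/
def sepPair : Particle → Particle → Prop
  | .half ε j k, .half ε' j' k' => k < k' ∨ (ε = ε' ∧ j = j' ∧ k = k')
  | .zero ε μ k, .zero ε' μ' k' => k < k' ∨ (ε = ε' ∧ μ = μ' ∧ k = k')
  | .half _ _ _, .zero _ _ _ => True
  | .zero _ _ _, .half _ _ _ => False

/-- A sequence of particles is separately ordered. -/
def SepOrdered (l : List Particle) : Prop := l.Chain' sepPair

/-- The order on particles: `ψ^A < ψ^B` iff `ψ^A ≠ ψ^B` and `ψ^A ψ^B` is separately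
ordered. -/
def pLT (x y : Particle) : Prop := x ≠ y ∧ sepPair x y

/-- The set of states (fixed particle numbers and initial/final domains). -/
def StateT (m n : ℤ) (M N : ℕ) (dI dF : ℤ × ℤ) : Type :=
  {l : List Particle // IsState m n M N dI dF l}

/-- `𝒜`: the ℚ-vector space with basis the set of states. -/
def SpaceA (m n : ℤ) (M N : ℕ) (dI dF : ℤ × ℤ) : Type :=
  StateT m n M N dI dF →₀ ℚ

noncomputable instance (m n : ℤ) (M N : ℕ) (dI dF : ℤ × ℤ) :
    AddCommGroup (SpaceA m n M N dI dF) := Finsupp.instAddCommGroup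
noncomputable instance (m n : ℤ) (M N : ℕ) (dI dF : ℤ × ℤ) :
    Module ℚ (SpaceA m n M N dI dF) := Finsupp.module _ _

/-- A state, as a basis vector of `𝒜`. -/
noncomputable def toA (m n : ℤ) (M N : ℕ) (dI dF : ℤ × ℤ) (x : StateT m n M N dI dF) :
    SpaceA m n M N dI dF :=
  Finsupp.single x 1

open Classical in
/-- `π(x) ∈ 𝒜`, where the permutation `π` is given by a word `w` in the transpositions
`σ_i` and `x` is a state. -/
noncomputable def wordElt (m n : ℤ) (M N : ℕ) (dI dF : ℤ × ℤ) (w : List ℕ)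
    (x : StateT m n M N dI dF) : SpaceA m n M N dI dF :=
  let r := applyWord m n dI w (1, x.val)
  if h : IsState m n M N dI dF r.2 then (r.1 : ℚ) • Finsupp.single ⟨r.2, h⟩ 1 else 0

/-- `ℛ`: the span of all `π(x) - x`, `π ∈ S_{M+N}`, `x` a state. -/
noncomputable def RSub (m n : ℤ) (M N : ℕ) (dI dF : ℤ × ℤ) :
    Submodule ℚ (SpaceA m n M N dI dF) :=
  Submodule.span ℚ
    {z | ∃ (w : List ℕ) (x : StateT m n M N dI dF),
      (∀ i ∈ w, i + 1 < M + N) ∧ z = wordElt m n M N dI dF w x - toA m n M N dI dF x}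


/-! ### Auxiliary development for the proof -/

section Aux

/-- The index `k` of a particle. -/
def pidx : Particle → ℤ
  | .half _ _ k => k
  | .zero _ _ k => k

/-- The weight of an ordered pair of particles. -/
def wt (c c' : Particle) : ℕ :=
  if c.isHalf = c'.isHalf then (pidx c - pidx c').toNat else 0

def Efn (c : Particle) (l : List Particle) : ℕ := (l.map (wt c)).sum

/-- The disorder measure within types. -/
def Dm : List Particle → ℕ
  | [] => 0
  | c :: cs => Efn c cs + Dm cs

def Tb : List Bool → ℕ
  | [] => 0
  | true :: bs => Tb bs
  | false :: bs => bs.count true + Tb bs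

/-- The type-inversion measure. -/
def Tm (l : List Particle) : ℕ := Tb (l.map Particle.isHalf)

lemma Efn_nil (c : Particle) : Efn c [] = 0 := rfl

lemma Efn_cons (c a : Particle) (l : List Particle) :
    Efn c (a :: l) = wt c a + Efn c l := by simp [Efn]

lemma Efn_append (c : Particle) (u v : List Particle) :
    Efn c (u ++ v) = Efn c u + Efn c v := by simp [Efn]

lemma Dm_lt_of (u l1 l2 : List Particle) (h1 : Dm l2 < Dm l1)
    (h2 : ∀ c, Efn c l2 ≤ Efn c l1) : Dm (u ++ l2) < Dm (u ++ l1) := by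
  induction u with
  | nil => exact h1
  | cons c u ih =>
      show Efn c (u ++ l2) + Dm (u ++ l2) < Efn c (u ++ l1) + Dm (u ++ l1)
      rw [Efn_append, Efn_append]
      have := h2 c
      omega

lemma Efn_pair_le (a b a' b' : Particle)
    (h : ∀ c, wt a' c + wt b' c ≤ wt a c + wt b c) (r : List Particle) :
    Efn a' r + Efn b' r ≤ Efn a r + Efn b r := by
  induction r with
  | nil => simp [Efn]
  | cons c r ih => simp only [Efn_cons]; have := h c; omega

lemma measure_same (u r : List Particle) (a b a' b' : Particle)
    (hab : b.isHalf = a.isHalf) (ha' : a'.isHalf = a.isHalf) (hb' : b'.isHalf = a.isHalf)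
    (hsum : pidx a' + pidx b' = pidx a + pidx b)
    (hhi1 : pidx a' ≤ pidx a) (hlo1 : pidx b ≤ pidx a')
    (hstrict : pidx a' - pidx b' < pidx a - pidx b)
    (hpos : pidx b < pidx a) :
    Tm (u ++ a' :: b' :: r) = Tm (u ++ a :: b :: r) ∧
    Dm (u ++ a' :: b' :: r) < Dm (u ++ a :: b :: r) := by
  have hlo2 : pidx b ≤ pidx b' := by omega
  have hhi2 : pidx b' ≤ pidx a := by omega
  constructor
  · unfold Tm
    simp only [List.map_append, List.map_cons, ha', hb', hab]
  · apply Dm_lt_of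
    · simp only [Dm, Efn_cons]
      have h1 : wt a' b' < wt a b := by
        unfold wt
        rw [if_pos (by rw [ha', hb']), if_pos (by rw [hab])]
        omega
      have h2 : Efn a' r + Efn b' r ≤ Efn a r + Efn b r := by
        apply Efn_pair_le
        intro c
        unfold wt
        rw [ha', hb', hab]
        by_cases hc : a.isHalf = c.isHalf
        · rw [if_pos hc, if_pos hc, if_pos hc, if_pos hc]
          omega
        · rw [if_neg hc, if_neg hc, if_neg hc, if_neg hc]
      omega
    · intro c
      simp only [Efn_cons]
      have h3 : wt c a' + wt c b' ≤ wt c a + wt c b := by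
        unfold wt
        rw [ha', hb', hab]
        by_cases hc : c.isHalf = a.isHalf
        · rw [if_pos hc, if_pos hc, if_pos hc, if_pos hc]
          omega
        · rw [if_neg hc, if_neg hc, if_neg hc, if_neg hc]
      omega

lemma Tb_mixed (u v : List Bool) :
    Tb (u ++ true :: false :: v) < Tb (u ++ false :: true :: v) := by
  induction u with
  | nil =>
      show v.count true + Tb v < (true :: v).count true + Tb v
      simp [List.count_cons]
  | cons b u ih =>
      cases b
      · show (u ++ true :: false :: v).count true + Tb (u ++ true :: false :: v) <
            (u ++ false :: true :: v).count true + Tb (u ++ false :: true :: v)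
        have hc : (u ++ true :: false :: v).count true = (u ++ false :: true :: v).count true := by
          simp [List.count_append, List.count_cons]
        omega
      · exact ih

lemma measure_mixed (u r : List Particle) (a b a' b' : Particle)
    (ha : a.isHalf = false) (hb : b.isHalf = true)
    (ha' : a'.isHalf = true) (hb' : b'.isHalf = false) :
    Tm (u ++ a' :: b' :: r) < Tm (u ++ a :: b :: r) := by
  unfold Tm
  simp only [List.map_append, List.map_cons, ha, hb, ha', hb']
  exact Tb_mixed _ _

lemma negOnePow_natAbs (k : ℤ) : ((-1 : ℤ)) ^ k.natAbs = if k % 2 = 0 then 1 else -1 := by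
  rcases Int.even_or_odd k with h | h
  · rw [Even.neg_one_pow (Int.natAbs_even.mpr h), if_pos (Int.even_iff.mp h)]
  · rw [Odd.neg_one_pow (Int.natAbs_odd.mpr h), if_neg (by have := Int.odd_iff.mp h; omega)]

set_option maxHeartbeats 1000000 in
lemma parity_core (ε ε' a a' k k' : ℤ)
    (hε : ε = 1 ∨ ε = -1) (hε' : ε' = 1 ∨ ε' = -1)
    (ha : a = 1 ∨ a = -1) (ha' : a' = 1 ∨ a' = -1)
    (h : ε * a = if k % 2 = 0 then 1 else -1)
    (h' : ε' * a' = if k' % 2 = 0 then 1 else -1) :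
    ((if ε = ε' then (1 : ℤ) else 0) + (if a = a' then 1 else 0)) % 2 = (k - k') % 2 := by
  have e1 : ((1:ℤ) = -1) = False := by norm_num
  have e2 : ((-1:ℤ) = 1) = False := by norm_num
  rcases hε with rfl | rfl <;> rcases hε' with rfl | rfl <;>
    rcases ha with rfl | rfl <;> rcases ha' with rfl | rfl <;>
    simp only [e1, e2, if_true, if_false, mul_one, mul_neg, one_mul, neg_neg,
      ite_true, ite_false] at h h' ⊢ <;>
    split_ifs at h h' ⊢ <;> omega

lemma parity_half (ε ε' : ℤ) (j j' : Fin 2) (k k' : ℤ)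
    (hε : ε = 1 ∨ ε = -1) (hε' : ε' = 1 ∨ ε' = -1)
    (h : ε * (-1) ^ (j : ℕ) = (-1) ^ k.natAbs)
    (h' : ε' * (-1) ^ (j' : ℕ) = (-1) ^ k'.natAbs) :
    ((if ε = ε' then (1 : ℤ) else 0) + (if j = j' then 1 else 0)) % 2 = (k - k') % 2 := by
  rw [negOnePow_natAbs] at h h'
  have hj : (j : ℕ) = 0 ∨ (j : ℕ) = 1 := by omega
  have hj' : (j' : ℕ) = 0 ∨ (j' : ℕ) = 1 := by omega
  have hiff : (j = j') ↔ ((-1 : ℤ) ^ (j : ℕ) = (-1) ^ (j' : ℕ)) := by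
    rw [Fin.ext_iff]
    rcases hj with h0 | h0 <;> rcases hj' with h1 | h1 <;> rw [h0, h1] <;> norm_num
  rw [if_congr hiff rfl rfl]
  apply parity_core ε ε' _ _ k k' hε hε' _ _ h h'
  · rcases hj with h0 | h0 <;> rw [h0] <;> norm_num
  · rcases hj' with h0 | h0 <;> rw [h0] <;> norm_num

set_option maxHeartbeats 1000000 in
lemma parity_zero (ε ε' μ μ' k k' : ℤ)
    (hε : ε = 1 ∨ ε = -1) (hμ : μ = 1 ∨ μ = -1)
    (hε' : ε' = 1 ∨ ε' = -1) (hμ' : μ' = 1 ∨ μ' = -1)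
    (h : -(ε * μ) = (-1) ^ k.natAbs)
    (h' : -(ε' * μ') = (-1) ^ k'.natAbs) :
    ((if ε = ε' then (1 : ℤ) else 0) + (if μ = μ' then 1 else 0)) % 2 = (k - k') % 2 := by
  rw [negOnePow_natAbs] at h h'
  have e1 : ((1:ℤ) = -1) = False := by norm_num
  have e2 : ((-1:ℤ) = 1) = False := by norm_num
  rcases hε with rfl | rfl <;> rcases hε' with rfl | rfl <;>
    rcases hμ with rfl | rfl <;> rcases hμ' with rfl | rfl <;>
    simp only [e1, e2, if_true, if_false, mul_one, mul_neg, one_mul, neg_neg,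
      ite_true, ite_false, neg_mul] at h h' ⊢ <;>
    split_ifs at h h' ⊢ <;> omega

lemma exch_mixed_types (m n ε μ k ε' : ℤ) (j : Fin 2) (k' : ℤ) (d : ℤ × ℤ) :
    (exch m n (.zero ε μ k) (.half ε' j k') d).1 = 1 ∧
    (exch m n (.zero ε μ k) (.half ε' j k') d).2.1.isHalf = true ∧
    (exch m n (.zero ε μ k) (.half ε' j k') d).2.2.isHalf = false := by
  simp only [exch]
  split_ifs <;> simp [Particle.isHalf]

lemma decrease_core (m n : ℤ) (u rest : List Particle) (a b : Particle) (d : ℤ × ℤ)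
    (hva : a.Valid) (hvb : b.Valid) (hpair : ¬ sepPair a b) :
    ((exch m n a b d).2.1 = a ∧ (exch m n a b d).2.2 = b ∧ (exch m n a b d).1 = -1) ∨
    Tm (u ++ (exch m n a b d).2.1 :: (exch m n a b d).2.2 :: rest) < Tm (u ++ a :: b :: rest) ∨
    (Tm (u ++ (exch m n a b d).2.1 :: (exch m n a b d).2.2 :: rest) = Tm (u ++ a :: b :: rest) ∧
     Dm (u ++ (exch m n a b d).2.1 :: (exch m n a b d).2.2 :: rest) < Dm (u ++ a :: b :: rest)) := by
  match a, b with
  | .half ε j k, .zero ε' μ' k' => simp [sepPair] at hpair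
  | .zero ε μ k, .half ε' j k' =>
      right; left
      obtain ⟨h1, h2, h3⟩ := exch_mixed_types m n ε μ k ε' j k' d
      exact measure_mixed u rest _ _ _ _ rfl rfl h2 h3
  | .half ε j k, .half ε' j' k' =>
      obtain ⟨hε1, hpar⟩ := hva
      obtain ⟨hε1', hpar'⟩ := hvb
      have hp : k' ≤ k ∧ ¬(ε = ε' ∧ j = j' ∧ k = k') := by
        simp only [sepPair] at hpair
        push_neg at hpair
        exact ⟨by omega, fun ⟨h1, h2, h3⟩ => hpair.2 h1 h2 h3⟩
      have hexch : exch m n (.half ε j k) (.half ε' j' k') d =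
          (-1, .half ε j (k' + ((if ε = ε' then 1 else 0) + (if j = j' then 1 else 0))),
               .half ε' j' (k - ((if ε = ε' then 1 else 0) + (if j = j' then 1 else 0)))) := rfl
      set ν : ℤ := (if ε = ε' then 1 else 0) + (if j = j' then 1 else 0) with hν
      have hpm := parity_half ε ε' j j' k k' hε1 hε1' hpar hpar'
      rw [← hν] at hpm
      have hν2 : 0 ≤ ν ∧ ν ≤ 2 := by rw [hν]; split_ifs <;> omega
      by_cases hone : k - k' = ν
      · left
        rw [hexch]
        refine ⟨?_, ?_, rfl⟩
        · show Particle.half ε j (k' + ν) = Particle.half ε j k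
          rw [show k' + ν = k by omega]
        · show Particle.half ε' j' (k - ν) = Particle.half ε' j' k'
          rw [show k - ν = k' by omega]
      · right; right
        have hlt : ν < k - k' := by
          by_cases hεe : ε = ε' <;> by_cases hje : j = j'
          · have : k ≠ k' := fun hk => hp.2 ⟨hεe, hje, hk⟩
            rw [hν, if_pos hεe, if_pos hje] at hpm ⊢
            omega
          · rw [hν, if_pos hεe, if_neg hje] at hpm ⊢
            omega
          · rw [hν, if_neg hεe, if_pos hje] at hpm ⊢
            omega
          · rw [hν, if_neg hεe, if_neg hje] at hpm ⊢
            omega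
        rw [hexch]
        exact measure_same u rest _ _ _ _ rfl rfl rfl
          (by simp only [pidx]; omega) (by simp only [pidx]; omega)
          (by simp only [pidx]; omega) (by simp only [pidx]; omega)
          (by simp only [pidx]; omega)
  | .zero ε μ k, .zero ε' μ' k' =>
      obtain ⟨hε1, hμ1, hpar⟩ := hva
      obtain ⟨hε1', hμ1', hpar'⟩ := hvb
      have hp : k' ≤ k ∧ ¬(ε = ε' ∧ μ = μ' ∧ k = k') := by
        simp only [sepPair] at hpair
        push_neg at hpair
        exact ⟨by omega, fun ⟨h1, h2, h3⟩ => hpair.2 h1 h2 h3⟩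
      have hexch : exch m n (.zero ε μ k) (.zero ε' μ' k') d =
          (-1, .zero ε μ (k' + ((if ε = ε' then 1 else 0) + (if μ = μ' then 1 else 0))),
               .zero ε' μ' (k - ((if ε = ε' then 1 else 0) + (if μ = μ' then 1 else 0)))) := rfl
      set ν : ℤ := (if ε = ε' then 1 else 0) + (if μ = μ' then 1 else 0) with hν
      have hpm := parity_zero ε ε' μ μ' k k' hε1 hμ1 hε1' hμ1' hpar hpar'
      rw [← hν] at hpm
      have hν2 : 0 ≤ ν ∧ ν ≤ 2 := by rw [hν]; split_ifs <;> omega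
      by_cases hone : k - k' = ν
      · left
        rw [hexch]
        refine ⟨?_, ?_, rfl⟩
        · show Particle.zero ε μ (k' + ν) = Particle.zero ε μ k
          rw [show k' + ν = k by omega]
        · show Particle.zero ε' μ' (k - ν) = Particle.zero ε' μ' k'
          rw [show k - ν = k' by omega]
      · right; right
        have hlt : ν < k - k' := by
          by_cases hεe : ε = ε' <;> by_cases hje : μ = μ'
          · have : k ≠ k' := fun hk => hp.2 ⟨hεe, hje, hk⟩
            rw [hν, if_pos hεe, if_pos hje] at hpm ⊢
            omega
          · rw [hν, if_pos hεe, if_neg hje] at hpm ⊢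
            omega
          · rw [hν, if_neg hεe, if_pos hje] at hpm ⊢
            omega
          · rw [hν, if_neg hεe, if_neg hje] at hpm ⊢
            omega
        rw [hexch]
        exact measure_same u rest _ _ _ _ rfl rfl rfl
          (by simp only [pidx]; omega) (by simp only [pidx]; omega)
          (by simp only [pidx]; omega) (by simp only [pidx]; omega)
          (by simp only [pidx]; omega)

lemma exch_fst (m n : ℤ) (a b : Particle) (d : ℤ × ℤ) :
    (exch m n a b d).1 = 1 ∨ (exch m n a b d).1 = -1 := by
  match a, b with
  | .half _ _ _, .half _ _ _ => right; rfl
  | .zero _ _ _, .zero _ _ _ => right; rfl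
  | .zero _ _ _, .half _ _ _ => simp only [exch]; split_ifs <;> simp
  | .half _ _ _, .zero _ _ _ => simp only [exch]; split_ifs <;> simp

lemma applyGen_fst (m n : ℤ) (dI : ℤ × ℤ) (i : ℕ) (l : List Particle) :
    (applyGen m n dI i (1, l)).1 = 1 ∨ (applyGen m n dI i (1, l)).1 = -1 := by
  unfold applyGen
  rcases h : l.drop i with _ | ⟨a, _ | ⟨b, rest⟩⟩ <;>
    simp only [show ((1 : ℤ), l).2 = l from rfl, h] <;> simp
  rcases exch_fst m n a b (runP dI rest) with h1 | h1 <;> rw [h1] <;> simp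

lemma applyGen_eq (m n : ℤ) (dI : ℤ × ℤ) (i : ℕ) (s : ℤ) (l : List Particle)
    (a b : Particle) (rest : List Particle) (h : l.drop i = a :: b :: rest) :
    applyGen m n dI i (s, l) =
      (s * (exch m n a b (runP dI rest)).1,
       l.take i ++ (exch m n a b (runP dI rest)).2.1 ::
         (exch m n a b (runP dI rest)).2.2 :: rest) := by
  unfold applyGen
  simp only [show ((s : ℤ), l).2 = l from rfl, show ((s : ℤ), l).1 = s from rfl, h]

open Classical in
lemma step (m n : ℤ) (M N : ℕ) (dI dF : ℤ × ℤ) (x : StateT m n M N dI dF)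
    (i : ℕ) (hi : i + 1 < M + N) :
    (RSub m n M N dI dF).mkQ (toA m n M N dI dF x) = 0 ∨
    ∃ (x' : StateT m n M N dI dF) (s : ℤ), (s = 1 ∨ s = -1) ∧
      x'.val = (applyGen m n dI i (1, x.val)).2 ∧
      (applyGen m n dI i (1, x.val)).1 = s ∧
      (RSub m n M N dI dF).mkQ (toA m n M N dI dF x)
        = (s : ℚ) • (RSub m n M N dI dF).mkQ (toA m n M N dI dF x') := by
  have hmem : wordElt m n M N dI dF [i] x - toA m n M N dI dF x ∈ RSub m n M N dI dF :=
    Submodule.subset_span ⟨[i], x, by simpa using hi, rfl⟩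
  have hq : (RSub m n M N dI dF).mkQ (toA m n M N dI dF x)
      = (RSub m n M N dI dF).mkQ (wordElt m n M N dI dF [i] x) := by
    rw [Submodule.mkQ_apply, Submodule.mkQ_apply, Submodule.Quotient.eq]
    simpa [neg_sub] using (RSub m n M N dI dF).neg_mem hmem
  have hr : wordElt m n M N dI dF [i] x =
      (if h : IsState m n M N dI dF (applyGen m n dI i (1, x.val)).2 then
        ((applyGen m n dI i (1, x.val)).1 : ℚ) •
          Finsupp.single (⟨(applyGen m n dI i (1, x.val)).2, h⟩ : StateT m n M N dI dF) 1
      else 0) := rfl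
  by_cases h : IsState m n M N dI dF (applyGen m n dI i (1, x.val)).2
  · right
    refine ⟨⟨_, h⟩, (applyGen m n dI i (1, x.val)).1, applyGen_fst m n dI i x.val,
      rfl, rfl, ?_⟩
    rw [hq, hr, dif_pos h]
    exact LinearMap.map_smul _ _ _
  · left
    rw [hq, hr, dif_neg h]
    exact LinearMap.map_zero _

lemma key (m n : ℤ) (M N : ℕ) (dI dF : ℤ × ℤ) :
    ∀ t d : ℕ, ∀ x : StateT m n M N dI dF, Tm x.val < t → Dm x.val < d →
      ((RSub m n M N dI dF).mkQ (toA m n M N dI dF x) = 0 ∨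
       ∃ (y : StateT m n M N dI dF) (c : ℚ), SepOrdered y.val ∧ (c = 1 ∨ c = -1) ∧
         (RSub m n M N dI dF).mkQ (toA m n M N dI dF x)
           = c • (RSub m n M N dI dF).mkQ (toA m n M N dI dF y)) := by
  intro t
  induction t with
  | zero => intro d x h; omega
  | succ t iht =>
    intro d
    induction d with
    | zero => intro x _ h; omega
    | succ d ihd =>
      intro x hT hD
      by_cases hord : SepOrdered x.val
      · exact Or.inr ⟨x, 1, hord, Or.inl rfl, (one_smul ℚ _).symm⟩
      unfold SepOrdered at hord
      simp only [List.Chain', List.isChain_iff_getElem] at hord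
      push_neg at hord
      obtain ⟨i, hilen, hpair⟩ := hord
      have h1 : i < x.val.length := by omega
      have h2 : i + 1 < x.val.length := by omega
      have hdrop : x.val.drop i = x.val[i] :: x.val[i + 1] :: x.val.drop (i + 2) := by
        rw [List.drop_eq_getElem_cons h1, List.drop_eq_getElem_cons h2]
      have hlen : x.val.length = M + N := by
        obtain ⟨hc1, hc2, _⟩ := x.property
        have hfun : (fun q => decide ¬((fun q => Particle.isHalf q) q = true))
            = (fun q => !Particle.isHalf q) := by
          funext q
          cases hq : Particle.isHalf q <;> simp [hq]
        have hle := List.length_eq_countP_add_countP (fun q => Particle.isHalf q) (l := x.val)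
        rw [hfun] at hle
        omega
      have hi : i + 1 < M + N := by omega
      rcases step m n M N dI dF x i hi with h0 | ⟨x', s, hs, hval, hsgn, heq⟩
      · exact Or.inl h0
      have hAG := applyGen_eq m n dI i 1 x.val _ _ _ hdrop
      set e := exch m n (x.val[i]) (x.val[i + 1]) (runP dI (x.val.drop (i + 2))) with he
      have hval' : x'.val = x.val.take i ++ e.2.1 :: e.2.2 :: x.val.drop (i + 2) := by
        rw [hval, hAG]
      have hsgn' : s = e.1 := by rw [← hsgn, hAG]; simp
      have hl : x.val.take i ++ x.val[i] :: x.val[i + 1] :: x.val.drop (i + 2) = x.val := by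
        conv_rhs => rw [← List.take_append_drop i x.val]
        rw [hdrop]
      have hvR : ∀ q ∈ x.val, q.Valid := x.property.2.2.1
      have hva : (x.val[i]).Valid := hvR _ (List.getElem_mem h1)
      have hvb : (x.val[i + 1]).Valid := hvR _ (List.getElem_mem h2)
      rcases decrease_core m n (x.val.take i) (x.val.drop (i + 2)) (x.val[i]) (x.val[i + 1])
          (runP dI (x.val.drop (i + 2))) hva hvb hpair with ⟨hA, hB, hC⟩ | hTlt | ⟨hTeq, hDlt⟩
      · -- the exchange fixes the state, with sign -1
        left
        have hxx : x' = x := by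
          apply Subtype.ext
          rw [hval', he, hA, hB, hl]
        have hsneg : s = -1 := by rw [hsgn', he]; exact hC
        rw [hxx, hsneg] at heq
        set Q := (RSub m n M N dI dF).mkQ (toA m n M N dI dF x) with hQ
        have h2Q : (2 : ℚ) • Q = 0 := by
          rw [two_smul]
          nth_rw 1 [heq]
          rw [Int.cast_neg, Int.cast_one, neg_one_smul, neg_add_cancel]
        calc Q = (2 : ℚ)⁻¹ • ((2 : ℚ) • Q) := (inv_smul_smul₀ (by norm_num) Q).symm
        _ = 0 := by rw [h2Q, smul_zero]
      · -- the type-inversion measure decreases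
        have hT' : Tm x'.val < t := by
          rw [hval', he]
          have h3 : Tm (x.val.take i ++ x.val[i] :: x.val[i + 1] :: x.val.drop (i + 2))
              = Tm x.val := by rw [hl]
          omega
        rcases iht (Dm x'.val + 1) x' hT' (Nat.lt_succ_self _) with h0 | ⟨y, c, hy, hc, heq'⟩
        · left; rw [heq, h0, smul_zero]
        · right
          refine ⟨y, (s : ℚ) * c, hy, ?_, ?_⟩
          · rcases hs with rfl | rfl <;> rcases hc with rfl | rfl <;> norm_num
          · rw [heq, heq', smul_smul]
      · -- the disorder measure decreases, type-inversion unchanged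
        have hT' : Tm x'.val < t + 1 := by
          rw [hval', he]
          have h3 : Tm (x.val.take i ++ x.val[i] :: x.val[i + 1] :: x.val.drop (i + 2))
              = Tm x.val := by rw [hl]
          omega
        have hD' : Dm x'.val < d := by
          rw [hval', he]
          have h3 : Dm (x.val.take i ++ x.val[i] :: x.val[i + 1] :: x.val.drop (i + 2))
              = Dm x.val := by rw [hl]
          omega
        rcases ihd x' hT' hD' with h0 | ⟨y, c, hy, hc, heq'⟩
        · left; rw [heq, h0, smul_zero]
        · right
          refine ⟨y, (s : ℚ) * c, hy, ?_, ?_⟩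
          · rcases hs with rfl | rfl <;> rcases hc with rfl | rfl <;> norm_num
          · rw [heq, heq', smul_smul]

end Aux

theorem stmt15 (m n : ℤ) (hmn : n < m) (hn : 1 ≤ n) (M N : ℕ)
    (dI dF : ℤ × ℤ) (hdI : IsDomain m n dI) (hdF : IsDomain m n dF)
    (x : StateT m n M N dI dF) :
    (RSub m n M N dI dF).mkQ (toA m n M N dI dF x) = 0 ∨
    ∃ (y : StateT m n M N dI dF) (c : ℚ), SepOrdered y.val ∧ (c = 1 ∨ c = -1) ∧
      (RSub m n M N dI dF).mkQ (toA m n M N dI dF x)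
        = c • (RSub m n M N dI dF).mkQ (toA m n M N dI dF y) := by
  exact key m n M N dI dF (Tm x.val + 1) (Dm x.val + 1) x (Nat.lt_succ_self _) (Nat.lt_succ_self _)

end Stmt15
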